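/- arXiv:2603.02204 — 2 statements merged into one kernel-verified Lean document; each statement's English description precedes it below -/
import Mathlib

section
/- Let R₀, R₁, …, R_m be exchangeable real-valued random variables (i.e., their joint law is invariant under all permutations of indices). Then for every integer r with 1 ≤ r ≤ m, the probability that R₀ is at most the r-th smallest value among R₁, …, R_m is at least r/(m+1). -/
open MeasureTheory

/-- The `k`-th smallest element (1-indexed) of a multiset of reals. -/
noncomputable def kthSmallest (s : Multiset ℝ) (k : ℕ) : ℝ := (s.sort (· ≤ ·)).getD (k - 1) 0

/-- A finite family of real random variables is exchangeable if the joint law is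
invariant under every permutation of the indices. -/
def Exchangeable {Ω : Type*} [MeasurableSpace Ω] (P : Measure Ω)
    {ι : Type*} [Fintype ι] (R : ι → Ω → ℝ) : Prop :=
  ∀ σ : Equiv.Perm ι,
    Measure.map (fun ω i => R (σ i) ω) P = Measure.map (fun ω i => R i ω) P

lemma sorted_count_lemma {l : List ℝ} (hl : l.Pairwise (· ≤ ·)) {r : ℕ} (hr1 : 1 ≤ r)
    (hrl : r ≤ l.length) (x : ℝ) :
    x ≤ l.getD (r - 1) 0 ↔ l.countP (fun y => decide (y < x)) < r := by
  have hk : r - 1 < l.length := by omega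
  rw [List.getD_eq_getElem l 0 hk]
  have hsplit : l = l.take (r-1) ++ l.drop (r-1) := (List.take_append_drop _ _).symm
  have key : ∀ c : ℝ, (∀ j (hj : j < l.length), r - 1 ≤ j → c ≤ l[j]) →
      l.countP (fun y => decide (y < c)) ≤ r - 1 := by
    intro c hc
    conv_lhs => rw [hsplit]
    rw [List.countP_append]
    have hA : (l.take (r-1)).countP (fun y => decide (y < c)) ≤ r - 1 := by
      calc (l.take (r-1)).countP (fun y => decide (y < c)) ≤ (l.take (r-1)).length :=
            List.countP_le_length
        _ ≤ r - 1 := by simp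
    have hB : (l.drop (r-1)).countP (fun y => decide (y < c)) = 0 := by
      rw [List.countP_eq_zero]
      intro a ha
      obtain ⟨j, hj, rfl⟩ := List.mem_iff_getElem.mp ha
      rw [List.getElem_drop]
      simp only [decide_eq_true_eq, not_lt]
      exact hc _ (by simp at hj ⊢; omega) (by omega)
    omega
  constructor
  · intro h
    have h1 : l.countP (fun y => decide (y < x)) ≤ r - 1 := by
      apply key
      intro j hj hrj
      refine le_trans h ?_
      have := hl.rel_get_of_le (a := ⟨r-1, hk⟩) (b := ⟨j, hj⟩) (by simpa using hrj)
      simpa using this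
    omega
  · intro h
    by_contra hx
    push_neg at hx
    have h2 : r ≤ l.countP (fun y => decide (y < x)) := by
      conv_rhs => rw [hsplit]
      rw [List.countP_append]
      have hA : (l.take (r-1)).countP (fun y => decide (y < x)) = r - 1 := by
        rw [List.countP_eq_length.mpr, List.length_take]
        · omega
        · intro a ha
          obtain ⟨j, hj, rfl⟩ := List.mem_iff_getElem.mp ha
          rw [List.getElem_take]
          simp only [decide_eq_true_eq]
          have hjlt : j ≤ r - 1 := by simp at hj; omega
          have : l[j] ≤ l[r-1] := by
            have := hl.rel_get_of_le (a := ⟨j, by omega⟩) (b := ⟨r-1, hk⟩) (by simpa using hjlt)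
            simpa using this
          exact lt_of_le_of_lt this hx
      have hB : 1 ≤ (l.drop (r-1)).countP (fun y => decide (y < x)) := by
        have hmem : l[r-1] ∈ l.drop (r-1) := by
          refine List.mem_iff_getElem.mpr ⟨0, by simp; omega, ?_⟩
          rw [List.getElem_drop]
          congr 1
        calc 1 = [l[r-1]].countP (fun y => decide (y < x)) := by simp [hx]
          _ ≤ _ := List.Sublist.countP_le (by simpa using hmem)
      omega
    omega

lemma le_kthSmallest_iff (s : Multiset ℝ) (r : ℕ) (hr1 : 1 ≤ r) (hrs : r ≤ Multiset.card s)
    (x : ℝ) : x ≤ kthSmallest s r ↔ Multiset.countP (fun y => y < x) s < r := by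
  have hsort : ((s.sort (· ≤ ·)) : Multiset ℝ) = s := Multiset.sort_eq s _
  have h := sorted_count_lemma (Multiset.pairwise_sort s (· ≤ ·)) hr1
    (by rw [Multiset.length_sort]; exact hrs) x
  rw [kthSmallest, h, ← Multiset.coe_countP, hsort]

lemma rank_count_lemma {n : ℕ} (v : Fin n → ℝ) (r : ℕ) (hrn : r ≤ n) :
    r ≤ (Finset.univ.filter fun j : Fin n =>
      (Finset.univ.filter fun i : Fin n => v i < v j).card < r).card := by
  classical
  set S := Finset.univ.filter fun j : Fin n =>
      (Finset.univ.filter fun i : Fin n => v i < v j).card < r with hS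
  by_cases hall : ∀ j : Fin n, (Finset.univ.filter fun i : Fin n => v i < v j).card < r
  · have : S = Finset.univ := by
      apply Finset.eq_univ_of_forall
      intro j; simp [hS, hall j]
    rw [this]; simpa using hrn
  · push_neg at hall
    obtain ⟨j0, hj0⟩ := hall
    have hT : (Finset.univ.filter fun j : Fin n =>
        r ≤ (Finset.univ.filter fun i : Fin n => v i < v j).card).Nonempty :=
      ⟨j0, by simpa using hj0⟩
    obtain ⟨j, hjT, hjmin⟩ := Finset.exists_min_image _ v hT
    simp only [Finset.mem_filter, Finset.mem_univ, true_and] at hjT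
    have hsub : (Finset.univ.filter fun i : Fin n => v i < v j) ⊆ S := by
      intro i hi
      simp only [Finset.mem_filter, Finset.mem_univ, true_and] at hi
      simp only [hS, Finset.mem_filter, Finset.mem_univ, true_and]
      by_contra hcon
      push_neg at hcon
      have := hjmin i (by simpa using hcon)
      exact absurd hi (not_lt.mpr this)
    exact le_trans hjT (Finset.card_le_card hsub)

lemma perm_filter_card {n : ℕ} (p : Fin n → Prop) [DecidablePred p] (σ : Equiv.Perm (Fin n)) :
    (Finset.univ.filter fun i => p (σ i)).card = (Finset.univ.filter p).card := by
  apply Finset.card_bij' (fun i _ => σ i) (fun i _ => σ.symm i) <;> simp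

theorem exchangeable_rank_lemma {Ω : Type*} [MeasurableSpace Ω]
    (P : Measure Ω) [IsProbabilityMeasure P] (m : ℕ)
    (R : Fin (m + 1) → Ω → ℝ) (hmeas : ∀ i, Measurable (R i))
    (hexch : Exchangeable P R) (r : ℕ) (hr1 : 1 ≤ r) (hrm : r ≤ m) :
    (P {ω | R 0 ω ≤ kthSmallest (Multiset.map (fun i : Fin m => R i.succ ω) Finset.univ.val) r}).toReal
      ≥ (r : ℝ) / ((m : ℝ) + 1) := by

  classical
  set vec : Ω → (Fin (m+1) → ℝ) := fun ω i => R i ω with hvecdef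
  have hvec : Measurable vec := measurable_pi_lambda _ hmeas
  set C : Fin (m+1) → Set (Fin (m+1) → ℝ) := fun j =>
      {v | (Finset.univ.filter fun i => v i < v j).card < r} with hCdef
  have hCmeas : ∀ j, MeasurableSet (C j) := by
    intro j
    have hf : Measurable fun v : Fin (m+1) → ℝ =>
        (Finset.univ.filter fun i => v i < v j).card := by
      simp only [Finset.card_filter]
      apply Finset.measurable_sum
      intro i _
      exact Measurable.ite (measurableSet_lt (measurable_pi_apply i) (measurable_pi_apply j))
        measurable_const measurable_const
    have hc : MeasurableSet {k : ℕ | k < r} := (Set.to_countable _).measurableSet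
    exact hf hc
  set B : Fin (m+1) → Set Ω := fun j => vec ⁻¹' C j with hBdef
  have hBmeas : ∀ j, MeasurableSet (B j) := fun j => hvec (hCmeas j)
  -- all B j have the same probability
  have hBeq : ∀ j, P (B j) = P (B 0) := by
    intro j
    have hσmeas : Measurable (fun ω i => R (Equiv.swap 0 j i) ω) :=
      measurable_pi_lambda _ (fun i => hmeas _)
    have h2 : Measure.map (fun ω i => R (Equiv.swap 0 j i) ω) P (C 0)
        = Measure.map vec P (C 0) := by rw [hexch (Equiv.swap 0 j)]
    rw [Measure.map_apply hσmeas (hCmeas 0), Measure.map_apply hvec (hCmeas 0)] at h2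
    have hpre : (fun ω i => R (Equiv.swap 0 j i) ω) ⁻¹' C 0 = B j := by
      ext ω
      simp only [hBdef, hCdef, Set.mem_preimage, Set.mem_setOf_eq, hvecdef,
        Equiv.swap_apply_left]
      have hpc := perm_filter_card (fun i => R i ω < R j ω) (Equiv.swap 0 j)
      rw [hpc]
    rw [hpre] at h2
    exact h2
  -- the sum bound
  have hsum : (r : ENNReal) ≤ ∑ j : Fin (m+1), P (B j) := by
    have h1 : ∀ j : Fin (m+1), P (B j) = ∫⁻ ω, (B j).indicator 1 ω ∂P :=
      fun j => (lintegral_indicator_one (hBmeas j)).symm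
    simp_rw [h1]
    rw [← lintegral_finset_sum _ (fun j _ => measurable_one.indicator (hBmeas j))]
    have hpt : ∀ ω, (r : ENNReal) ≤ ∑ j : Fin (m+1), (B j).indicator 1 ω := by
      intro ω
      have : ∀ j, (B j).indicator (1 : Ω → ENNReal) ω
          = if (Finset.univ.filter fun i => R i ω < R j ω).card < r then 1 else 0 := by
        intro j
        by_cases h : ω ∈ B j
        · simp only [Set.indicator_of_mem h, Pi.one_apply]
          simp only [hBdef, hCdef, Set.mem_preimage, Set.mem_setOf_eq, hvecdef] at h
          rw [if_pos h]
        · simp only [Set.indicator_of_notMem h]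
          simp only [hBdef, hCdef, Set.mem_preimage, Set.mem_setOf_eq, hvecdef] at h
          rw [if_neg h]
      simp_rw [this]
      rw [Finset.sum_boole]
      have := rank_count_lemma (fun i => R i ω) r (by omega)
      exact_mod_cast Nat.cast_le.mpr this
    calc (r : ENNReal) = ∫⁻ _, (r : ENNReal) ∂P := by simp
      _ ≤ _ := lintegral_mono hpt
  have hsum2 : (r : ENNReal) ≤ ((m + 1 : ℕ) : ENNReal) * P (B 0) := by
    calc (r : ENNReal) ≤ ∑ j : Fin (m+1), P (B j) := hsum
      _ = ∑ _j : Fin (m+1), P (B 0) := by simp_rw [hBeq]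
      _ = ((m + 1 : ℕ) : ENNReal) * P (B 0) := by
          rw [Finset.sum_const, Finset.card_univ, Fintype.card_fin, nsmul_eq_mul]
  -- the stated set equals B 0
  have hset : {ω | R 0 ω ≤ kthSmallest
      (Multiset.map (fun i : Fin m => R i.succ ω) Finset.univ.val) r} = B 0 := by
    ext ω
    simp only [hBdef, hCdef, Set.mem_preimage, Set.mem_setOf_eq, hvecdef]
    rw [le_kthSmallest_iff _ r hr1 (by simp [hrm])]
    rw [Multiset.countP_map]
    have heq : Multiset.card (Multiset.filter (fun a : Fin m => R a.succ ω < R 0 ω)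
          Finset.univ.val)
        = (Finset.univ.filter fun i : Fin (m+1) => R i ω < R 0 ω).card := by
      rw [← Finset.filter_val, ← Finset.card_def]
      simp only [Finset.card_filter]
      rw [Fin.sum_univ_succ]
      simp
    rw [heq]
  rw [hset]
  -- convert to real
  have hfin : ((m + 1 : ℕ) : ENNReal) * P (B 0) ≠ ⊤ :=
    ENNReal.mul_ne_top (by simp) (measure_ne_top P _)
  have htr : (r : ℝ) ≤ (((m + 1 : ℕ) : ENNReal) * P (B 0)).toReal := by
    have := ENNReal.toReal_mono hfin hsum2
    simpa using this
  rw [ENNReal.toReal_mul, ENNReal.toReal_natCast] at htr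
  rw [ge_iff_le, div_le_iff₀ (by positivity)]
  push_cast at htr
  linarith [htr]
end

section
/- Let R₀, R₁, …, R_m be exchangeable real-valued random variables and let B₁, …, B_{n-m} be arbitrary additional real-valued random variables on the same probability space. Let q̂ be the k-th order statistic of the combined multiset {R₁,…,R_m, B₁,…,B_{n-m}} for some 1 ≤ k ≤ n. If k - (n - m) ≥ 1, then P(R₀ ≤ q̂) ≥ (k - (n - m))/(m + 1). -/
open MeasureTheory
open scoped ENNReal

/-! ### Auxiliary deterministic lemmas on sorted lists -/

private lemma aux_countP_ge_of_not_le (l : List ℝ) (hl : l.Pairwise (· ≤ ·)) (k : ℕ)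
    (hk1 : 1 ≤ k) (hk : k ≤ l.length) (x : ℝ) (h : ¬ x ≤ l.getD (k-1) 0) :
    k ≤ l.countP (fun y => decide (y < x)) := by
  push_neg at h
  have hlen : k - 1 < l.length := by omega
  rw [List.getD_eq_getElem _ _ hlen] at h
  calc k = (l.take k).length := by rw [List.length_take]; omega
    _ = (l.take k).countP (fun y => decide (y < x)) := by
        symm
        rw [List.countP_eq_length]
        intro a ha
        rw [List.mem_take_iff_getElem] at ha
        obtain ⟨i, hi, rfl⟩ := ha
        simp only [decide_eq_true_eq]
        have : l[i] ≤ l[k-1] :=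
          hl.rel_get_of_le (a := ⟨i, by omega⟩) (b := ⟨k-1, hlen⟩) (by simp; omega)
        linarith
    _ ≤ l.countP (fun y => decide (y < x)) := (List.take_sublist _ _).countP_le

private lemma aux_countP_le_ge (l : List ℝ) (hl : l.Pairwise (· ≤ ·)) (k : ℕ) (hk1 : 1 ≤ k)
    (hk : k ≤ l.length) :
    k ≤ l.countP (fun y => decide (y ≤ l.getD (k-1) 0)) := by
  have hlen : k - 1 < l.length := by omega
  rw [List.getD_eq_getElem _ _ hlen]
  calc k = (l.take k).length := by rw [List.length_take]; omega
    _ = (l.take k).countP (fun y => decide (y ≤ l[k-1])) := by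
        symm
        rw [List.countP_eq_length]
        intro a ha
        rw [List.mem_take_iff_getElem] at ha
        obtain ⟨i, hi, rfl⟩ := ha
        simp only [decide_eq_true_eq]
        exact hl.rel_get_of_le (a := ⟨i, by omega⟩) (b := ⟨k-1, hlen⟩) (by simp; omega)
    _ ≤ l.countP _ := (List.take_sublist _ _).countP_le

private lemma aux_countP_lt_lt (l : List ℝ) (hl : l.Pairwise (· ≤ ·)) (k : ℕ) (hk1 : 1 ≤ k)
    (hk : k ≤ l.length) :
    l.countP (fun y => decide (y < l.getD (k-1) 0)) < k := by
  have hlen : k - 1 < l.length := by omega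
  rw [List.getD_eq_getElem _ _ hlen]
  obtain ⟨q, hq⟩ : ∃ q, l[k-1] = q := ⟨_, rfl⟩
  rw [hq]
  calc l.countP (fun y => decide (y < q))
      = (l.take (k-1)).countP (fun y => decide (y < q))
        + (l.drop (k-1)).countP (fun y => decide (y < q)) := by
        rw [← List.countP_append, List.take_append_drop]
    _ ≤ (k-1) + 0 := by
        refine Nat.add_le_add ?_ ?_
        · exact le_trans List.countP_le_length (by rw [List.length_take]; omega)
        · rw [Nat.le_zero, List.countP_eq_zero]
          intro a ha
          rw [List.mem_drop_iff_getElem] at ha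
          obtain ⟨i, hi, rfl⟩ := ha
          simp only [decide_eq_true_eq, not_lt]
          rw [← hq]
          have := hl.rel_get_of_le (a := ⟨k-1, hlen⟩) (b := ⟨k-1+i, by
            have := List.length_drop (i := k-1) (l := l); omega⟩) (by simp)
          simpa [List.getElem_drop] using this
    _ < k := by omega

private lemma aux_mcountP_sort (s : Multiset ℝ) (p : ℝ → Prop) [DecidablePred p] :
    s.countP p = (s.sort (· ≤ ·)).countP (fun a => decide (p a)) := by
  conv_lhs => rw [← Multiset.sort_eq (s := s) (r := (· ≤ ·))]
  rw [Multiset.coe_countP]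

/-- If fewer than `k` elements of `s` are `< x`, then `x ≤` the `k`-th smallest of `s`. -/
private lemma aux_M1 (s : Multiset ℝ) (k : ℕ) (hk1 : 1 ≤ k) (hk : k ≤ Multiset.card s)
    (x : ℝ) (h : s.countP (· < x) < k) : x ≤ kthSmallest s k := by
  by_contra hx
  have := aux_countP_ge_of_not_le (s.sort (· ≤ ·)) (Multiset.pairwise_sort _ _) k hk1
    (by rw [Multiset.length_sort]; exact hk) x hx
  rw [aux_mcountP_sort] at h
  omega

private lemma aux_M2 (s : Multiset ℝ) (k : ℕ) (hk1 : 1 ≤ k) (hk : k ≤ Multiset.card s) :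
    k ≤ s.countP (· ≤ kthSmallest s k) := by
  rw [aux_mcountP_sort]
  exact aux_countP_le_ge _ (Multiset.pairwise_sort _ _) k hk1
    (by rw [Multiset.length_sort]; exact hk)

private lemma aux_M3 (s : Multiset ℝ) (k : ℕ) (hk1 : 1 ≤ k) (hk : k ≤ Multiset.card s) :
    s.countP (· < kthSmallest s k) < k := by
  rw [aux_mcountP_sort]
  exact aux_countP_lt_lt _ (Multiset.pairwise_sort _ _) k hk1
    (by rw [Multiset.length_sort]; exact hk)

private lemma aux_countP_mono (s : Multiset ℝ) (p q : ℝ → Prop) [DecidablePred p]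
    [DecidablePred q] (h : ∀ a, p a → q a) : s.countP p ≤ s.countP q := by
  rw [Multiset.countP_eq_card_filter, Multiset.countP_eq_card_filter]
  exact Multiset.card_le_card (Multiset.monotone_filter_right s h)

private lemma aux_countP_map_univ {ι : Type*} [Fintype ι] (f : ι → ℝ) (p : ℝ → Prop)
    [DecidablePred p] :
    (Multiset.map f Finset.univ.val).countP p = ∑ i, if p (f i) then 1 else 0 := by
  rw [Multiset.countP_map]
  rw [show (Finset.univ.val.filter fun a => p (f a))
      = (Finset.univ.filter fun a => p (f a)).val from (Finset.filter_val _ _).symm]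
  exact Finset.card_filter _ _

/-- The rank count: the number of coordinates strictly below `v j`. -/
noncomputable def rankCnt {N : ℕ} (v : Fin N → ℝ) (j : Fin N) : ℕ :=
  (Multiset.map v Finset.univ.val).countP (· < v j)

private lemma aux_rankCnt_eq_sum {N : ℕ} (v : Fin N → ℝ) (j : Fin N) :
    rankCnt v j = ∑ i, if v i < v j then 1 else 0 :=
  aux_countP_map_univ v _

/-- Pointwise: at least `k` indices have rank count `< k`. -/
private lemma aux_pointwise {N : ℕ} (v : Fin N → ℝ) (k : ℕ) (hk1 : 1 ≤ k) (hk : k ≤ N) :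
    k ≤ (Finset.univ.filter (fun j => rankCnt v j < k)).card := by
  set s := Multiset.map v Finset.univ.val with hs
  have hcard : Multiset.card s = N := by simp [hs]
  set c := kthSmallest s k with hc
  have h2 : k ≤ s.countP (· ≤ c) := aux_M2 s k hk1 (by omega)
  have h3 : s.countP (· < c) < k := aux_M3 s k hk1 (by omega)
  have hEq : s.countP (· ≤ c) = (Finset.univ.filter (fun j => v j ≤ c)).card := by
    rw [hs, aux_countP_map_univ]
    exact (Finset.card_filter _ _).symm
  have hsub : (Finset.univ.filter (fun j => v j ≤ c))
      ⊆ (Finset.univ.filter (fun j => rankCnt v j < k)) := by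
    intro j hj
    simp only [Finset.mem_filter, Finset.mem_univ, true_and] at hj ⊢
    have : rankCnt v j ≤ s.countP (· < c) := by
      rw [rankCnt, ← hs]
      exact aux_countP_mono s _ _ (fun a ha => lt_of_lt_of_le ha hj)
    omega
  calc k ≤ (Finset.univ.filter (fun j => v j ≤ c)).card := by omega
    _ ≤ _ := Finset.card_le_card hsub

private lemma aux_rankCnt_meas {N : ℕ} (j : Fin N) :
    Measurable (fun v : Fin N → ℝ => rankCnt v j) := by
  have : (fun v : Fin N → ℝ => rankCnt v j)
      = fun v => ∑ i, if v i < v j then 1 else 0 := funext fun v => aux_rankCnt_eq_sum v j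
  rw [this]
  exact Finset.measurable_sum _ fun i _ => Measurable.ite
    (measurableSet_lt (measurable_pi_apply i) (measurable_pi_apply j))
    measurable_const measurable_const

theorem contaminated_quantile_coverage {Ω : Type*} [MeasurableSpace Ω]
    (P : Measure Ω) [IsProbabilityMeasure P] (n m : ℕ) (hmn : m ≤ n)
    (R : Fin (m + 1) → Ω → ℝ) (hmeas : ∀ i, Measurable (R i))
    (hexch : Exchangeable P R)
    (B : Fin (n - m) → Ω → ℝ)
    (k : ℕ) (hk1 : 1 ≤ k) (hkn : k ≤ n) (hgap : n - m < k) :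
    (P {ω | R 0 ω ≤ kthSmallest
        (Multiset.map (fun i : Fin m => R i.succ ω) Finset.univ.val
          + Multiset.map (fun j : Fin (n - m) => B j ω) Finset.univ.val) k}).toReal
      ≥ ((k : ℝ) - ((n : ℝ) - (m : ℝ))) / ((m : ℝ) + 1) := by
  classical
  set k' := k - (n - m) with hk'
  have hk'1 : 1 ≤ k' := by omega
  have hk'm : k' ≤ m := by omega
  set vec : Ω → (Fin (m+1) → ℝ) := fun ω i => R i ω with hvec
  have hvecmeas : Measurable vec := measurable_pi_lambda _ hmeas
  set Sev : Fin (m+1) → Set (Fin (m+1) → ℝ) := fun j => {v | rankCnt v j < k'} with hSev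
  have hSmeas : ∀ j, MeasurableSet (Sev j) := fun j =>
    aux_rankCnt_meas j (MeasurableSet.of_discrete (s := {t : ℕ | t < k'}))
  set A : Fin (m+1) → Set Ω := fun j => vec ⁻¹' (Sev j) with hA
  have hAmeas : ∀ j, MeasurableSet (A j) := fun j => hvecmeas (hSmeas j)
  -- Step 1: all events A j have the same probability
  have hsame : ∀ j, P (A j) = P (A 0) := by
    intro j
    set σ := Equiv.swap (0 : Fin (m+1)) j with hσ
    have hmapuniv : Finset.univ.val.map σ = Finset.univ.val := by
      have := congrArg Finset.val (Finset.map_univ_equiv σ)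
      rwa [Finset.map_val] at this
    have hkey : (fun v : Fin (m+1) → ℝ => v ∘ σ) ⁻¹' (Sev 0) = Sev j := by
      ext v
      simp only [Set.mem_preimage, hSev, Set.mem_setOf_eq]
      have hcnt : rankCnt (v ∘ σ) 0 = rankCnt v j := by
        unfold rankCnt
        rw [show Multiset.map (v ∘ σ) Finset.univ.val
            = Multiset.map v (Finset.univ.val.map σ) from (Multiset.map_map v σ _).symm,
          hmapuniv]
        simp [Function.comp, hσ, Equiv.swap_apply_left]
      rw [hcnt]
    have hmeasσ : Measurable (fun ω (i : Fin (m+1)) => R (σ i) ω) :=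
      measurable_pi_lambda _ fun i => hmeas (σ i)
    calc P (A j) = P (vec ⁻¹' ((fun v => v ∘ σ) ⁻¹' (Sev 0))) := by rw [hkey]
      _ = P ((fun ω (i : Fin (m+1)) => R (σ i) ω) ⁻¹' (Sev 0)) := rfl
      _ = (Measure.map (fun ω (i : Fin (m+1)) => R (σ i) ω) P) (Sev 0) :=
          (Measure.map_apply hmeasσ (hSmeas 0)).symm
      _ = (Measure.map (fun ω (i : Fin (m+1)) => R i ω) P) (Sev 0) := by rw [hexch σ]
      _ = P (A 0) := Measure.map_apply hvecmeas (hSmeas 0)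
  -- Step 2: sum of probabilities is at least k'
  have hsum : (k' : ℝ≥0∞) ≤ ∑ j : Fin (m+1), P (A j) := by
    have hpt : ∀ ω, (k' : ℝ≥0∞)
        ≤ ∑ j : Fin (m+1), (A j).indicator (fun _ => (1:ℝ≥0∞)) ω := by
      intro ω
      have : ∑ j : Fin (m+1), (A j).indicator (fun _ => (1:ℝ≥0∞)) ω
          = ((Finset.univ.filter (fun j : Fin (m+1) => rankCnt (vec ω) j < k')).card
              : ℝ≥0∞) := by
        rw [← Finset.sum_boole]
        congr 1
        ext j
        simp [Set.indicator_apply, hA, hSev]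
      rw [this]
      exact_mod_cast Nat.cast_le.mpr (aux_pointwise (vec ω) k' hk'1 (by omega))
    calc (k' : ℝ≥0∞) = ∫⁻ _, (k' : ℝ≥0∞) ∂P := by simp
      _ ≤ ∫⁻ ω, ∑ j : Fin (m+1), (A j).indicator (fun _ => (1:ℝ≥0∞)) ω ∂P :=
          lintegral_mono hpt
      _ = ∑ j : Fin (m+1), ∫⁻ ω, (A j).indicator (fun _ => (1:ℝ≥0∞)) ω ∂P :=
          lintegral_finset_sum _ fun j _ => (measurable_const.indicator (hAmeas j))
      _ = ∑ j : Fin (m+1), P (A j) := by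
          exact Finset.sum_congr rfl fun j _ => lintegral_indicator_one (hAmeas j)
  -- Step 3: so (m+1) * P (A 0) ≥ k'
  have hstep3 : (k' : ℝ≥0∞) ≤ ((m:ℝ≥0∞) + 1) * P (A 0) := by
    calc (k' : ℝ≥0∞) ≤ ∑ j : Fin (m+1), P (A j) := hsum
      _ = ∑ _j : Fin (m+1), P (A 0) := Finset.sum_congr rfl fun j _ => hsame j
      _ = ((m+1 : ℕ) : ℝ≥0∞) * P (A 0) := by
          rw [Finset.sum_const, Finset.card_univ, Fintype.card_fin, nsmul_eq_mul]
      _ = ((m:ℝ≥0∞) + 1) * P (A 0) := by push_cast; ring_nf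
  -- Step 4: A 0 is contained in the target event
  set E := {ω | R 0 ω ≤ kthSmallest
      (Multiset.map (fun i : Fin m => R i.succ ω) Finset.univ.val
        + Multiset.map (fun j : Fin (n - m) => B j ω) Finset.univ.val) k} with hE
  have hsub : A 0 ⊆ E := by
    intro ω hω
    simp only [hA, Set.mem_preimage, hSev, Set.mem_setOf_eq] at hω
    set sR := Multiset.map (fun i : Fin m => R i.succ ω) Finset.univ.val with hsR
    set sB := Multiset.map (fun j : Fin (n - m) => B j ω) Finset.univ.val with hsB
    have hcardR : Multiset.card sR = m := by simp [hsR]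
    have hcardB : Multiset.card sB = n - m := by simp [hsB]
    have hcardu : k ≤ Multiset.card (sR + sB) := by
      rw [Multiset.card_add, hcardR, hcardB]; omega
    refine aux_M1 _ k hk1 hcardu _ ?_
    have hcntR : sR.countP (· < R 0 ω) < k' := by
      have h0 : rankCnt (vec ω) 0 = sR.countP (· < R 0 ω) := by
        rw [aux_rankCnt_eq_sum, hsR, aux_countP_map_univ]
        rw [Fin.sum_univ_succ]
        simp [hvec]
      omega
    have hcntB : sB.countP (· < R 0 ω) ≤ n - m := hcardB ▸ Multiset.countP_le_card _ _
    rw [Multiset.countP_add]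
    omega
  have hE' : (k' : ℝ≥0∞) ≤ ((m:ℝ≥0∞) + 1) * P E :=
    le_trans hstep3 (mul_le_mul_right (measure_mono hsub) _)
  -- Step 5: conclude
  have hPE1 : P E ≠ ⊤ := measure_ne_top P E
  have htop : ((m:ℝ≥0∞) + 1) * P E ≠ ⊤ :=
    ENNReal.mul_ne_top (by simp) hPE1
  have hreal : (k' : ℝ) ≤ ((m:ℝ) + 1) * (P E).toReal := by
    have := ENNReal.toReal_mono htop hE'
    rwa [ENNReal.toReal_natCast, ENNReal.toReal_mul, ENNReal.toReal_add (by simp) (by simp),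
      ENNReal.toReal_natCast, ENNReal.toReal_one] at this
  have hcast : ((k' : ℕ) : ℝ) = (k : ℝ) - ((n : ℝ) - (m : ℝ)) := by
    rw [hk', Nat.cast_sub (le_of_lt hgap), Nat.cast_sub hmn]
  rw [ge_iff_le, div_le_iff₀ (by positivity)]
  rw [← hcast]
  linarith
end
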